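/- Gaussian expectation identity (perpendicular component, mixture of regressions). Let Z₁, Z₂, Z₃ be independent standard normal random variables, let α > 0, β ≥ 0, σ ≥ 0, and set ρ = β/α. Then E[ Z₂ · sign(αZ₁ + βZ₂) · |Z₁ + σZ₃| ] = (2/π)·ρ·√(ρ² + σ² + σ²ρ²)/(1 + ρ²). -/

import Mathlib

open MeasureTheory ProbabilityTheory

/-- `sign(v) = 1` if `v ≥ 0` and `−1` otherwise. -/
noncomputable def sgn (v : ℝ) : ℝ := if 0 ≤ v then 1 else -1

/-!
Integrate out `Z₂` first: for `β > 0`, `y φ(y) = -φ'(y)` gives `E[Z₂ sgn(a + βZ₂)] = 2 φ(a/β)`,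
`φ` the standard normal density. The weight `φ(x) · φ(αx/β)` is a multiple of the `N(0, v)`
density with `v = ρ²/(1 + ρ²)`, so what remains is a multiple of `E|X + σZ₃|` with `X ~ N(0, v)`
independent of `Z₃`. Then `X + σZ₃ ~ N(0, v + σ²)`, whose absolute mean is `√(2(v + σ²)/π)`.
-/

open Real Set Filter Topology
open scoped NNReal

lemma integral_Ioi_mul_exp_neg_mul_sq {b : ℝ} (hb : 0 < b) (t : ℝ) :
    ∫ x in Ioi t, x * rexp (-b * x ^ 2) = rexp (-b * t ^ 2) / (2 * b) := by
  have hderiv (x : ℝ) :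
      HasDerivAt (fun y ↦ -rexp (-b * y ^ 2) / (2 * b)) (x * rexp (-b * x ^ 2)) x := by
    convert! (((hasDerivAt_pow 2 x).const_mul (-b)).exp.neg.div_const (2 * b)) using 1
    field_simp
    ring
  have hlim : Tendsto (fun y ↦ -rexp (-b * y ^ 2) / (2 * b)) atTop (𝓝 0) := by
    simpa using ((tendsto_exp_atBot.comp ((tendsto_pow_atTop two_ne_zero).const_mul_atTop_of_neg
      (neg_lt_zero.2 hb))).neg.div_const (2 * b))
  rw [integral_Ioi_of_hasDerivAt_of_tendsto (hderiv t).continuousAt.continuousWithinAt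
    (fun x _ ↦ hderiv x) (integrable_mul_exp_neg_mul_sq hb).integrableOn hlim]
  ring

lemma integral_abs_mul_exp_neg_mul_sq {b : ℝ} (hb : 0 < b) :
    ∫ x, |x| * rexp (-b * x ^ 2) = 1 / b := by
  have h := integral_comp_abs (f := fun x ↦ x * rexp (-b * x ^ 2))
  simp only [sq_abs] at h
  rw [h, integral_Ioi_mul_exp_neg_mul_sq hb, zero_pow two_ne_zero, mul_zero, exp_zero]
  field_simp

lemma gaussianPDFReal_zero_mean (v : ℝ≥0) (x : ℝ) :
    gaussianPDFReal 0 v x = (√(2 * π * v))⁻¹ * rexp (-(2 * (v : ℝ))⁻¹ * x ^ 2) := by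
  rw [gaussianPDFReal, sub_zero, neg_div, div_eq_inv_mul, neg_mul]

lemma integrable_fun_id_gaussianReal (m : ℝ) (v : ℝ≥0) :
    Integrable (fun x ↦ x) (gaussianReal m v) :=
  memLp_one_iff_integrable.1 (memLp_id_gaussianReal' 1 ENNReal.one_ne_top)

lemma integral_abs_gaussianReal (v : ℝ≥0) : ∫ x, |x| ∂gaussianReal 0 v = √(2 * v / π) := by
  rcases eq_or_ne v 0 with rfl | hv
  · simp [gaussianReal_zero_var]
  have hv' : (0 : ℝ) < v := by positivity
  rw [integral_gaussianReal_eq_integral_smul hv]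
  have h (x : ℝ) : gaussianPDFReal 0 v x • |x| =
      (√(2 * π * v))⁻¹ * (|x| * rexp (-(2 * (v : ℝ))⁻¹ * x ^ 2)) := by
    rw [gaussianPDFReal_zero_mean, smul_eq_mul]
    ring
  simp_rw [h]
  rw [integral_const_mul, integral_abs_mul_exp_neg_mul_sq (by positivity), one_div, inv_inv,
    show 2 * (v : ℝ) / π = (2 * v) ^ 2 / (2 * π * v) by field_simp, sqrt_div' _ (by positivity),
    sqrt_sq (by positivity), inv_mul_eq_div]

@[fun_prop]
lemma measurable_sgn : Measurable sgn :=
  Measurable.ite measurableSet_Ici measurable_const measurable_const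

lemma abs_sgn (u : ℝ) : |sgn u| = 1 := by
  unfold sgn; split_ifs <;> simp

lemma sgn_mul_of_pos {c : ℝ} (hc : 0 < c) (u : ℝ) : sgn (c * u) = sgn u := by
  simp only [sgn, mul_nonneg_iff_of_pos_left hc]

lemma integral_mul_sgn_sub {μ : Measure ℝ} {f : ℝ → ℝ} (hf : Integrable f μ) (t : ℝ) :
    ∫ y, f y * sgn (y - t) ∂μ = 2 * ∫ y in Ici t, f y ∂μ - ∫ y, f y ∂μ := by
  have h (y : ℝ) : f y * sgn (y - t) = 2 * (Ici t).indicator f y - f y := by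
    by_cases hy : t ≤ y
    · simp only [sgn, sub_nonneg, hy, ↓reduceIte, mem_Ici, indicator_of_mem]
      ring
    · simp [sgn, hy]
  simp_rw [h]
  rw [integral_sub ((hf.indicator measurableSet_Ici).const_mul 2) hf, integral_const_mul,
    integral_indicator measurableSet_Ici]

lemma setIntegral_Ici_gaussianReal {v : ℝ≥0} (hv : v ≠ 0) (t : ℝ) :
    ∫ y in Ici t, y ∂gaussianReal 0 v = v * gaussianPDFReal 0 v t := by
  have hv' : (0 : ℝ) < v := by positivity
  rw [← integral_indicator measurableSet_Ici, integral_gaussianReal_eq_integral_smul hv]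
  simp_rw [← indicator_smul_apply, smul_eq_mul, gaussianPDFReal_zero_mean]
  rw [integral_indicator measurableSet_Ici, integral_Ici_eq_integral_Ioi]
  simp_rw [mul_assoc, integral_const_mul, mul_comm (rexp _)]
  rw [integral_Ioi_mul_exp_neg_mul_sq (by positivity)]
  field_simp

lemma integral_mul_sgn_sub_gaussianReal {v : ℝ≥0} (hv : v ≠ 0) (t : ℝ) :
    ∫ y, y * sgn (y - t) ∂gaussianReal 0 v = 2 * v * gaussianPDFReal 0 v t := by
  rw [integral_mul_sgn_sub (integrable_fun_id_gaussianReal 0 v), setIntegral_Ici_gaussianReal hv,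
    integral_id_gaussianReal]
  ring

lemma integral_mul_sgn_mul_add_gaussianReal (a : ℝ) {b : ℝ} (hb : 0 < b) (x : ℝ) :
    ∫ y, y * sgn (a * x + b * y) ∂gaussianReal 0 1 = 2 * gaussianPDFReal 0 1 (a / b * x) := by
  have h (y : ℝ) : a * x + b * y = b * (y - -(a / b * x)) := by field_simp; ring
  simp_rw [h, sgn_mul_of_pos hb, integral_mul_sgn_sub_gaussianReal one_ne_zero,
    gaussianPDFReal_zero_mean, neg_sq, NNReal.coe_one, mul_one]

lemma gaussianPDFReal_mul_gaussianPDFReal_const_mul {k : ℝ} {v : ℝ≥0}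
    (hv : (v : ℝ) * (1 + k ^ 2) = 1) (x : ℝ) :
    gaussianPDFReal 0 1 x * gaussianPDFReal 0 1 (k * x) =
      √(v / (2 * π)) * gaussianPDFReal 0 v x := by
  have hv' : (0 : ℝ) < v := by nlinarith [sq_nonneg k, v.2]
  have hexp : -(2 : ℝ)⁻¹ * x ^ 2 + -(2 : ℝ)⁻¹ * (k * x) ^ 2 = -(2 * (v : ℝ))⁻¹ * x ^ 2 := by
    field_simp
    linear_combination (-x ^ 2) * hv
  have hconst : (√(2 * π))⁻¹ * (√(2 * π))⁻¹ = √(v / (2 * π)) * (√(2 * π * v))⁻¹ := by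
    rw [sqrt_mul (by positivity) (v : ℝ), sqrt_div' _ (by positivity)]
    field_simp
  simp only [gaussianPDFReal_zero_mean, NNReal.coe_one, mul_one]
  rw [mul_mul_mul_comm, ← exp_add, hexp, hconst, mul_assoc]

lemma integral_gaussianPDFReal_const_mul_mul {k : ℝ} {v : ℝ≥0} (hv : (v : ℝ) * (1 + k ^ 2) = 1)
    (f : ℝ → ℝ) :
    ∫ x, gaussianPDFReal 0 1 (k * x) * f x ∂gaussianReal 0 1 =
      √(v / (2 * π)) * ∫ x, f x ∂gaussianReal 0 v := by
  have hv0 : v ≠ 0 := by rintro rfl; simp at hv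
  simp_rw [integral_gaussianReal_eq_integral_smul one_ne_zero,
    integral_gaussianReal_eq_integral_smul hv0, smul_eq_mul, ← integral_const_mul, ← mul_assoc,
    gaussianPDFReal_mul_gaussianPDFReal_const_mul hv]

lemma integral_integral_abs_add_mul_gaussianReal (v : ℝ≥0) (σ : ℝ) :
    ∫ x, ∫ w, |x + σ * w| ∂gaussianReal 0 1 ∂gaussianReal 0 v = √(2 * (v + σ ^ 2) / π) := by
  set τ : ℝ≥0 := ⟨σ ^ 2, sq_nonneg σ⟩
  have hmap : (gaussianReal 0 1).map (σ * ·) = gaussianReal 0 τ := by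
    rw [gaussianReal_map_const_mul, mul_zero, mul_one]; rfl
  have hscale (x : ℝ) : ∫ w, |x + σ * w| ∂gaussianReal 0 1 = ∫ u, |x + u| ∂gaussianReal 0 τ := by
    rw [← hmap, integral_map (by fun_prop) (by fun_prop)]
  simp_rw [hscale]
  rw [← integral_conv, gaussianReal_conv_gaussianReal, zero_add, integral_abs_gaussianReal]
  · rfl
  · rw [gaussianReal_conv_gaussianReal]
    exact (integrable_fun_id_gaussianReal _ _).abs

lemma integrable_mul_sgn_mul_abs_gaussianReal (α β σ : ℝ) :
    Integrable (fun z : ℝ × ℝ × ℝ ↦ z.2.1 * sgn (α * z.1 + β * z.2.1) * |z.1 + σ * z.2.2|)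
      ((gaussianReal 0 1).prod ((gaussianReal 0 1).prod (gaussianReal 0 1))) := by
  have hid := (integrable_fun_id_gaussianReal 0 1).abs
  have hbound := (hid.mul_prod (hid.mul_prod (integrable_const 1))).add
    (((integrable_const 1).mul_prod (hid.mul_prod hid)).const_mul |σ|)
  refine hbound.mono' (by fun_prop) (ae_of_all _ fun z ↦ ?_)
  have htri : |z.1 + σ * z.2.2| ≤ |z.1| + |σ| * |z.2.2| := by
    simpa only [abs_mul] using abs_add_le z.1 (σ * z.2.2)
  calc ‖z.2.1 * sgn (α * z.1 + β * z.2.1) * |z.1 + σ * z.2.2|‖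
      = |z.2.1| * |z.1 + σ * z.2.2| := by
        simp only [norm_mul, norm_eq_abs, abs_sgn, mul_one, abs_abs]
    _ ≤ |z.2.1| * (|z.1| + |σ| * |z.2.2|) := by gcongr
    _ = _ := by simp only [Pi.add_apply]; ring

lemma integral_mul_sgn_mul_abs_eq_integral_mul_integral (α β σ : ℝ) :
    ∫ z : ℝ × ℝ × ℝ, z.2.1 * sgn (α * z.1 + β * z.2.1) * |z.1 + σ * z.2.2|
        ∂((gaussianReal 0 1).prod ((gaussianReal 0 1).prod (gaussianReal 0 1))) =
      ∫ x, (∫ y, y * sgn (α * x + β * y) ∂gaussianReal 0 1) *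
        ∫ w, |x + σ * w| ∂gaussianReal 0 1 ∂gaussianReal 0 1 := by
  rw [integral_prod _ (integrable_mul_sgn_mul_abs_gaussianReal α β σ)]
  exact integral_congr_ae (ae_of_all _ fun x ↦
    integral_prod_mul (fun y ↦ y * sgn (α * x + β * y)) (fun w ↦ |x + σ * w|))

theorem gaussian_identity_perpendicular_mixture (α β σ : ℝ) (hα : 0 < α) (hβ : 0 ≤ β) :
    (∫ z : ℝ × ℝ × ℝ, z.2.1 * sgn (α * z.1 + β * z.2.1) * |z.1 + σ * z.2.2|
        ∂((gaussianReal 0 1).prod ((gaussianReal 0 1).prod (gaussianReal 0 1)))) =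
      2 / Real.pi * (β / α) * Real.sqrt ((β / α) ^ 2 + σ ^ 2 + σ ^ 2 * (β / α) ^ 2)
        / (1 + (β / α) ^ 2) := by
  rw [integral_mul_sgn_mul_abs_eq_integral_mul_integral]
  rcases hβ.eq_or_lt with rfl | hβ_pos
  · simp [integral_mul_const]
  set ρ := β / α with hρ_def
  have hρ : 0 < ρ := div_pos hβ_pos hα
  let v : ℝ≥0 := ⟨ρ ^ 2 / (1 + ρ ^ 2), by positivity⟩
  have hv_coe : (v : ℝ) = ρ ^ 2 / (1 + ρ ^ 2) := rfl
  have hv : (v : ℝ) * (1 + (α / β) ^ 2) = 1 := by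
    rw [hv_coe, hρ_def]
    field_simp
    ring
  simp_rw [integral_mul_sgn_mul_add_gaussianReal α hβ_pos, mul_assoc, integral_const_mul,
    integral_gaussianPDFReal_const_mul_mul hv, integral_integral_abs_add_mul_gaussianReal]
  have hsq : (v : ℝ) / (2 * π) * (2 * (v + σ ^ 2) / π) =
      (ρ * √(ρ ^ 2 + σ ^ 2 + σ ^ 2 * ρ ^ 2) / ((1 + ρ ^ 2) * π)) ^ 2 := by
    rw [div_pow, mul_pow, sq_sqrt (by positivity), hv_coe]
    field_simp
    ring
  rw [← sqrt_mul (by positivity), hsq, sqrt_sq (by positivity)]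
  field_simp
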